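/- For i,j,k ∈ [10] with j ≠ k and I ⊆ [10] with |I| = 5, the inner product of v_1(i,j,k) = ((1/10)𝟏 − e_i, (2/10)𝟏 − e_j − e_k, α_1) and v_5(I) = ((1/2)𝟏 − Σ_{i∈I} e_i, 0, α_1) equals |{i} ∩ I|, which is 0 or 1. -/
import Mathlib


noncomputable section

/-- The ambient space ℝ¹⁰ ⊕ ℝ¹⁰ ⊕ ℝ². -/
abbrev V : Type := (Fin 10 → ℝ) × (Fin 10 → ℝ) × (Fin 2 → ℝ)

/-- The standard inner product on ℝ¹⁰ ⊕ ℝ¹⁰ ⊕ ℝ². -/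
def ip (x y : V) : ℝ :=
  (∑ t, x.1 t * y.1 t) + (∑ t, x.2.1 t * y.2.1 t) + (∑ t, x.2.2 t * y.2.2 t)

/-- α₁ = (1/2, −1/2). -/
def α1 : Fin 2 → ℝ := fun i => if (i : ℕ) = 1 then -(1 / 2) else 1 / 2

/-- v₁(i,j,k) = ((1/10)𝟏 − eᵢ, (2/10)𝟏 − eⱼ − e_k, α₁). -/
def v1 (i j k : Fin 10) : V :=
  ((fun t => 1 / 10 - if t = i then 1 else 0),
   (fun t => 2 / 10 - (if t = j then (1 : ℝ) else 0) - (if t = k then 1 else 0)),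
   α1)

/-- v₅(I) = ((1/2)𝟏 − Σ_{i∈I} eᵢ, 0, α₁). -/
def v5 (I : Finset (Fin 10)) : V :=
  ((fun t => 1 / 2 - if t ∈ I then 1 else 0), 0, α1)


/-- For i,j,k ∈ [10] with j ≠ k and I ⊆ [10] with |I| = 5, the inner product of
v₁(i,j,k) and v₅(I) equals |{i} ∩ I|, which is 0 or 1. -/
theorem stmt14 (i j k : Fin 10) (hjk : j ≠ k) (I : Finset (Fin 10)) (hI : I.card = 5) :
    ip (v1 i j k) (v5 I) = ((({i} : Finset (Fin 10)) ∩ I).card : ℝ) ∧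
    ((({i} : Finset (Fin 10)) ∩ I).card = 0 ∨ (({i} : Finset (Fin 10)) ∩ I).card = 1) := by
  have hcard : (({i} : Finset (Fin 10)) ∩ I).card = if i ∈ I then 1 else 0 := by
    by_cases h : i ∈ I <;> simp [Finset.singleton_inter_of_mem, Finset.singleton_inter_of_notMem, h]
  have hsumI : ∑ t : Fin 10, (if t ∈ I then (1:ℝ) else 0) = 5 := by
    rw [Finset.sum_boole]
    simp [Finset.filter_mem_eq_inter, hI]
  have hprod : ∑ t : Fin 10, (if t = i then (1:ℝ) else 0) * (if t ∈ I then 1 else 0)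
      = if i ∈ I then 1 else 0 := by
    rw [Finset.sum_eq_single i]
    · simp
    · intro b _ hb; simp [hb]
    · simp
  have h1 : ∑ t : Fin 10, (1/10 - if t = i then (1:ℝ) else 0) * (1/2 - if t ∈ I then 1 else 0)
      = (if i ∈ I then 1 else 0) - 1/2 := by
    have : ∀ t : Fin 10, (1/10 - if t = i then (1:ℝ) else 0) * (1/2 - if t ∈ I then 1 else 0)
        = 1/20 - (1/10)*(if t ∈ I then 1 else 0) - (1/2)*(if t = i then 1 else 0)
          + (if t = i then 1 else 0)*(if t ∈ I then 1 else 0) := by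
      intro t; ring
    simp only [this]
    rw [Finset.sum_add_distrib, Finset.sum_sub_distrib, Finset.sum_sub_distrib,
      ← Finset.mul_sum, ← Finset.mul_sum, hsumI, hprod, Finset.sum_const,
      Finset.sum_ite_eq' Finset.univ i (fun _ => (1:ℝ))]
    by_cases h : i ∈ I <;> simp [h] <;> ring
  refine ⟨?_, ?_⟩
  · simp only [ip, v1, v5, hcard, α1]
    rw [h1, Fin.sum_univ_two]
    by_cases h : i ∈ I <;> simp [h] <;> norm_num
  · rw [hcard]; by_cases h : i ∈ I <;> simp [h]

end
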